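/- Let p, q, r satisfy p+q > −1, q > −1 and r > −1, and let k ≥ 2. Then E[ L_{k−1}^p · ℓ_k^q · ℓ_1^r ] ≤ T^{p+q+r} · B(1+p+q, 1+r) · (1+q)^{−1} · (1+p+q)^{2−k}. -/

import Mathlib

open MeasureTheory ProbabilityTheory Real Finset

noncomputable section

/-- stick-breaking remainder `L_n = T ∏_{i=1}^n U_i`, built from the values `u i` of the
uniform random variables. -/
def Lrem (T : ℝ) (u : ℕ → ℝ) (n : ℕ) : ℝ := T * ∏ i ∈ Finset.Icc 1 n, u i

/-- stick length `ℓ_i = L_{i-1} - L_i`, for `i ≥ 1`. -/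
def stick (T : ℝ) (u : ℕ → ℝ) (i : ℕ) : ℝ := Lrem T u (i - 1) - Lrem T u i

/-- the uniform distribution on `(0,1)`. -/
def unif01 : Measure ℝ := volume.restrict (Set.Ioo (0:ℝ) 1)

/-- the Beta function. -/
def betaFn (x y : ℝ) : ℝ := Real.Gamma x * Real.Gamma y / Real.Gamma (x + y)

variable {Ω : Type*}

/-- `(U_i)` is an i.i.d. sequence of uniform random variables on `(0,1)`. -/
def UHyp [MeasurableSpace Ω] (μ : Measure Ω) (U : ℕ → Ω → ℝ) : Prop :=
  (∀ i, Measurable (U i)) ∧ (∀ i, μ.map (U i) = unif01) ∧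
    iIndepFun U μ

lemma real_beta_integral {a b : ℝ} (ha : 0 < a) (hb : 0 < b) :
    ∫ x in (0:ℝ)..1, x ^ (a-1) * (1-x) ^ (b-1) = betaFn a b := by
  have ha' : 0 < (a:ℂ).re := by simpa using ha
  have hb' : 0 < (b:ℂ).re := by simpa using hb
  have key := Complex.Gamma_mul_Gamma_eq_betaIntegral ha' hb'
  have hcon : Complex.betaIntegral a b
      = ((∫ x in (0:ℝ)..1, x ^ (a-1) * (1-x) ^ (b-1) : ℝ) : ℂ) := by
    rw [Complex.betaIntegral, ← intervalIntegral.integral_ofReal]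
    refine intervalIntegral.integral_congr fun x hx => ?_
    rw [Set.uIcc_of_le (by norm_num : (0:ℝ) ≤ 1)] at hx
    push_cast
    rw [Complex.ofReal_cpow hx.1 (a-1), Complex.ofReal_cpow (by linarith [hx.2]) (b-1)]
    push_cast
    ring
  have hG : Complex.Gamma ((a:ℂ) + b) ≠ 0 := by
    rw [← Complex.ofReal_add, Complex.Gamma_ofReal]
    exact_mod_cast (Real.Gamma_pos_of_pos (by positivity)).ne'
  rw [hcon] at key
  have : ((betaFn a b : ℝ) : ℂ) = ((∫ x in (0:ℝ)..1, x ^ (a-1) * (1-x) ^ (b-1) : ℝ) : ℂ) := by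
    rw [betaFn]
    push_cast
    simp only [← Complex.Gamma_ofReal, Complex.ofReal_add]
    rw [div_eq_iff hG, key]
    ring
  exact_mod_cast this.symm

lemma integrableOn_beta {a b : ℝ} (ha : 0 < a) (hb : 0 < b) :
    IntegrableOn (fun x : ℝ => x ^ (a-1) * (1-x) ^ (b-1)) (Set.Ioo 0 1) volume := by
  have ha' : 0 < (a:ℂ).re := by simpa using ha
  have hb' : 0 < (b:ℂ).re := by simpa using hb
  have hc := (Complex.betaIntegral_convergent ha' hb')
  rw [intervalIntegrable_iff_integrableOn_Ioo_of_le (by norm_num : (0:ℝ) ≤ 1)] at hc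
  have := hc.re
  refine this.congr ?_
  filter_upwards [self_mem_ae_restrict measurableSet_Ioo] with x hx
  rw [show ((x:ℂ) ^ ((a:ℂ)-1) * (1 - (x:ℂ)) ^ ((b:ℂ)-1))
      = ((x ^ (a-1) * (1-x) ^ (b-1) : ℝ) : ℂ) by
    push_cast
    rw [Complex.ofReal_cpow hx.1.le (a-1), Complex.ofReal_cpow (by linarith [hx.2]) (b-1)]
    push_cast; ring]
  simp

lemma lint_beta {a b : ℝ} (ha : 0 < a) (hb : 0 < b) :
    ∫⁻ x, ENNReal.ofReal (x ^ (a-1) * (1-x) ^ (b-1)) ∂unif01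
      = ENNReal.ofReal (betaFn a b) := by
  rw [unif01, ← ofReal_integral_eq_lintegral_ofReal (integrableOn_beta ha hb)
    (by filter_upwards [self_mem_ae_restrict measurableSet_Ioo] with x hx using
      mul_nonneg (Real.rpow_nonneg hx.1.le _) (Real.rpow_nonneg (by linarith [hx.2]) _))]
  rw [← integral_Ioc_eq_integral_Ioo, ← intervalIntegral.integral_of_le (by norm_num : (0:ℝ) ≤ 1),
    real_beta_integral ha hb]

lemma betaFn_one_right {x : ℝ} (hx : 0 < x) : betaFn x 1 = x⁻¹ := by
  rw [betaFn, Real.Gamma_one, Real.Gamma_add_one hx.ne']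
  field_simp [(Real.Gamma_pos_of_pos hx).ne']

lemma betaFn_one_left {y : ℝ} (hy : 0 < y) : betaFn 1 y = y⁻¹ := by
  rw [betaFn, Real.Gamma_one, one_mul, show (1:ℝ) + y = y + 1 by ring,
    Real.Gamma_add_one hy.ne']
  field_simp [(Real.Gamma_pos_of_pos hy).ne']

lemma lintegral_prod_iIndep {Ω : Type*} [MeasurableSpace Ω] {μ : Measure Ω}
    [IsProbabilityMeasure μ] {V : ℕ → Ω → ENNReal}
    (hV : iIndepFun V μ) (hVm : ∀ i, Measurable (V i))
    (s : Finset ℕ) :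
    ∫⁻ ω, ∏ i ∈ s, V i ω ∂μ = ∏ i ∈ s, ∫⁻ ω, V i ω ∂μ := by
  classical
  induction s using Finset.induction with
  | empty => simp
  | @insert a s hi ih =>
    rw [Finset.prod_insert hi, ← ih]
    have h := (hV.indepFun_finset_prod_of_notMem hVm hi).symm
    have h2 := lintegral_mul_eq_lintegral_mul_lintegral_of_indepFun (hVm a)
      (Finset.measurable_prod s fun i _ => hVm i) (show IndepFun (V a) (fun ω => ∏ i ∈ s, V i ω) μ by
        rw [show (fun ω => ∏ i ∈ s, V i ω) = ∏ j ∈ s, V j from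
          funext fun ω => (Finset.prod_apply ω s V).symm]; exact h)
    simp only [Pi.mul_apply] at h2
    rw [← h2]
    refine lintegral_congr fun ω => ?_
    rw [Finset.prod_insert hi]

lemma key_real (T p q r : ℝ) (hT : 0 < T) (k : ℕ) (hk : 2 ≤ k) (u : ℕ → ℝ)
    (hu : ∀ i, u i ∈ Set.Ioo (0:ℝ) 1) :
    Lrem T u (k-1) ^ p * stick T u k ^ q * stick T u 1 ^ r
      = T ^ (p+q+r) * ∏ i ∈ Finset.Icc 1 k,
          (u i ^ ((if i = k then (1:ℝ) else 1+p+q) - 1) *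
            (1 - u i) ^ ((if i = 1 then 1+r else if i = k then 1+q else (1:ℝ)) - 1)) := by
  have hk1 : (1:ℕ) ≤ k - 1 := by omega
  have hkk : k - 1 + 1 = k := by omega
  set A : ℝ := ∏ i ∈ Finset.Icc 1 (k-1), u i with hA
  have hApos : 0 < A := Finset.prod_pos fun i _ => (hu i).1
  have hL : Lrem T u (k-1) = T * A := rfl
  have hLk : Lrem T u k = T * A * u k := by
    rw [Lrem, ← hkk, Finset.prod_Icc_succ_top (by omega)]
    rw [hkk, mul_assoc]
  have hstk : stick T u k = T * A * (1 - u k) := by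
    rw [stick, hL, hLk]; ring
  have hst1 : stick T u 1 = T * (1 - u 1) := by
    simp [stick, Lrem]
    ring
  -- RHS product manipulation
  have hprod : ∏ i ∈ Finset.Icc 1 k,
      (u i ^ ((if i = k then (1:ℝ) else 1+p+q) - 1) *
        (1 - u i) ^ ((if i = 1 then 1+r else if i = k then 1+q else (1:ℝ)) - 1))
      = A ^ (p+q) * (1 - u 1) ^ r * (1 - u k) ^ q := by
    rw [← hkk, Finset.prod_Icc_succ_top (by omega), hkk]
    have hkne1 : k ≠ 1 := by omega
    rw [if_pos rfl, if_neg hkne1, if_pos rfl]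
    have hstep : ∀ i ∈ Finset.Icc 1 (k-1),
        (u i ^ ((if i = k then (1:ℝ) else 1+p+q) - 1) *
          (1 - u i) ^ ((if i = 1 then 1+r else if i = k then 1+q else (1:ℝ)) - 1))
        = u i ^ (p+q) * (if i = 1 then (1 - u i) ^ r else 1) := by
      intro i hi
      have hik : i ≠ k := by simp only [Finset.mem_Icc] at hi; omega
      rw [if_neg hik]
      by_cases h1 : i = 1
      · rw [if_pos h1, if_pos h1, show (1:ℝ)+p+q-1 = p+q by ring,
          show (1:ℝ)+r-1 = r by ring]
      · rw [if_neg h1, if_neg hik, if_neg h1, show (1:ℝ)+p+q-1 = p+q by ring]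
        norm_num
    rw [Finset.prod_congr rfl hstep, Finset.prod_mul_distrib,
      Real.finset_prod_rpow _ _ (fun i _ => (hu i).1.le),
      Finset.prod_ite_eq' (Finset.Icc 1 (k-1)) 1 (fun i => (1 - u i) ^ r),
      if_pos (by simp only [Finset.mem_Icc]; omega)]
    rw [show (1:ℝ) - 1 = 0 by ring, Real.rpow_zero, show (1:ℝ)+q-1 = q by ring]
    ring
  rw [hprod, hL, hstk, hst1,
    Real.mul_rpow hT.le hApos.le,
    Real.mul_rpow (mul_nonneg hT.le hApos.le) (by linarith [(hu k).2]),
    Real.mul_rpow hT.le hApos.le,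
    Real.mul_rpow hT.le (by linarith [(hu 1).2]),
    Real.rpow_add hT, Real.rpow_add hT, Real.rpow_add hApos]
  ring

lemma ofReal_finset_prod {s : Finset ℕ} {f : ℕ → ℝ} (h : ∀ i ∈ s, 0 ≤ f i) :
    ENNReal.ofReal (∏ i ∈ s, f i) = ∏ i ∈ s, ENNReal.ofReal (f i) := by
  classical
  induction s using Finset.induction with
  | empty => simp
  | @insert a s ha ih =>
    rw [Finset.prod_insert ha, Finset.prod_insert ha,
      ENNReal.ofReal_mul (h a (Finset.mem_insert_self a s)),
      ih (fun i hi => h i (Finset.mem_insert_of_mem hi))]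

/-- **Lemma A.1 (c)**: the bound `E[L_{k-1}^p ℓ_k^q ℓ_1^r] ≤ T^{p+q+r} B(1+p+q,1+r)
(1+q)^{-1} (1+p+q)^{2-k}`. -/
theorem stick_breaking_remainder_moment_bound
    {Ω : Type*} [MeasurableSpace Ω] (μ : Measure Ω) [IsProbabilityMeasure μ]
    (U : ℕ → Ω → ℝ) (hU : UHyp μ U) (T : ℝ) (hT : 0 < T)
    (p q r : ℝ) (hpq : -1 < p + q) (hq : -1 < q) (hr : -1 < r)
    (k : ℕ) (hk : 2 ≤ k) :
    ∫⁻ ω, ENNReal.ofReal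
        (Lrem T (fun i => U i ω) (k-1) ^ p * stick T (fun i => U i ω) k ^ q *
          stick T (fun i => U i ω) 1 ^ r) ∂μ
      ≤ ENNReal.ofReal (T ^ (p+q+r) * betaFn (1+p+q) (1+r) * (1+q)⁻¹ *
          (1+p+q) ^ (2 - (k:ℝ))) := by
  obtain ⟨hUm, hUd, hUi⟩ := hU
  have hk1 : k ≠ 1 := by omega
  have hkk : k - 1 + 1 = k := by omega
  have hpq0 : (0:ℝ) < 1 + p + q := by linarith
  have hq0 : (0:ℝ) < 1 + q := by linarith
  have hr0 : (0:ℝ) < 1 + r := by linarith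
  have hgm : ∀ i : ℕ, Measurable (fun x : ℝ => ENNReal.ofReal
      (x ^ ((if i = k then (1:ℝ) else 1+p+q) - 1) *
        (1-x) ^ ((if i = 1 then 1+r else if i = k then 1+q else (1:ℝ)) - 1))) :=
    fun i => by fun_prop
  have hae : ∀ᵐ ω ∂μ, ∀ i, U i ω ∈ Set.Ioo (0:ℝ) 1 := by
    rw [ae_all_iff]
    intro i
    have h1 : μ.map (U i) (Set.Ioo (0:ℝ) 1)ᶜ = 0 := by
      rw [hUd i, unif01, Measure.restrict_apply measurableSet_Ioo.compl]
      simp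
    rw [Measure.map_apply (hUm i) measurableSet_Ioo.compl] at h1
    rw [ae_iff]
    exact h1
  -- Step 1: rewrite integrand a.e. as a product
  have hstep1 : ∫⁻ ω, ENNReal.ofReal
        (Lrem T (fun i => U i ω) (k-1) ^ p * stick T (fun i => U i ω) k ^ q *
          stick T (fun i => U i ω) 1 ^ r) ∂μ
      = ENNReal.ofReal (T ^ (p+q+r)) * ∏ i ∈ Finset.Icc 1 k,
          ∫⁻ ω, ENNReal.ofReal
            (U i ω ^ ((if i = k then (1:ℝ) else 1+p+q) - 1) *
              (1 - U i ω) ^ ((if i = 1 then 1+r else if i = k then 1+q else (1:ℝ)) - 1)) ∂μ := by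
    rw [lintegral_congr_ae (g := fun ω => ENNReal.ofReal (T ^ (p+q+r)) *
        ∏ i ∈ Finset.Icc 1 k, ENNReal.ofReal
          (U i ω ^ ((if i = k then (1:ℝ) else 1+p+q) - 1) *
            (1 - U i ω) ^ ((if i = 1 then 1+r else if i = k then 1+q else (1:ℝ)) - 1)))
        ?_]
    · have hm : Measurable (fun ω => ∏ i ∈ Finset.Icc 1 k, ENNReal.ofReal
          (U i ω ^ ((if i = k then (1:ℝ) else 1+p+q) - 1) *
            (1 - U i ω) ^ ((if i = 1 then 1+r else if i = k then 1+q else (1:ℝ)) - 1))) :=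
        Finset.measurable_prod _ fun i _ => (hgm i).comp (hUm i)
      rw [lintegral_const_mul _ hm]
      congr 1
      exact lintegral_prod_iIndep (V := fun i ω => ENNReal.ofReal
          (U i ω ^ ((if i = k then (1:ℝ) else 1+p+q) - 1) *
            (1 - U i ω) ^ ((if i = 1 then 1+r else if i = k then 1+q else (1:ℝ)) - 1)))
        (hUi.comp _ hgm) (fun i => (hgm i).comp (hUm i)) _
    · filter_upwards [hae] with ω hω
      rw [key_real T p q r hT k hk _ hω,
        ENNReal.ofReal_mul (Real.rpow_nonneg hT.le _),
        ofReal_finset_prod (fun i _ => mul_nonneg (Real.rpow_nonneg (hω i).1.le _)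
          (Real.rpow_nonneg (by linarith [(hω i).2]) _))]
  have hfac : ∀ i ∈ Finset.Icc 1 k, ∫⁻ ω, ENNReal.ofReal
        (U i ω ^ ((if i = k then (1:ℝ) else 1+p+q) - 1) *
          (1 - U i ω) ^ ((if i = 1 then 1+r else if i = k then 1+q else (1:ℝ)) - 1)) ∂μ
      = ENNReal.ofReal (betaFn (if i = k then (1:ℝ) else 1+p+q)
          (if i = 1 then 1+r else if i = k then 1+q else (1:ℝ))) := by
    intro i _
    rw [← lintegral_map (hgm i) (hUm i), hUd i]
    exact lint_beta (by split_ifs <;> linarith) (by split_ifs <;> linarith)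
  rw [hstep1, Finset.prod_congr rfl hfac]
  have hmem1 : (1:ℕ) ∈ Finset.Icc 1 (k-1) := by simp only [Finset.mem_Icc]; omega
  have hmid : ∀ i ∈ Finset.Ioc 1 (k-1),
      ENNReal.ofReal (betaFn (if i = k then (1:ℝ) else 1+p+q)
        (if i = 1 then 1+r else if i = k then 1+q else (1:ℝ)))
      = ENNReal.ofReal ((1+p+q)⁻¹) := by
    intro i hi
    simp only [Finset.mem_Ioc] at hi
    rw [if_neg (by omega), if_neg (by omega), if_neg (by omega), betaFn_one_right hpq0]
  have hprodval : ∏ i ∈ Finset.Icc 1 k, ENNReal.ofReal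
        (betaFn (if i = k then (1:ℝ) else 1+p+q)
          (if i = 1 then 1+r else if i = k then 1+q else (1:ℝ)))
      = ENNReal.ofReal (betaFn (1+p+q) (1+r)) * ENNReal.ofReal ((1+q)⁻¹) *
          ENNReal.ofReal ((1+p+q)⁻¹) ^ (k-2) := by
    rw [← hkk, Finset.prod_Icc_succ_top (by omega), hkk,
      ← Finset.mul_prod_erase _ _ hmem1, Finset.Icc_erase_left,
      Finset.prod_congr rfl hmid, Finset.prod_const, Nat.card_Ioc]
    rw [if_pos rfl, if_neg hk1, if_neg (show (1:ℕ) ≠ k by omega), if_pos rfl,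
      if_pos rfl, betaFn_one_left hq0, show k - 1 - 1 = k - 2 by omega]
    ring
  rw [hprodval]
  apply le_of_eq
  have hBnn : 0 ≤ betaFn (1+p+q) (1+r) :=
    le_of_lt (div_pos (mul_pos (Real.Gamma_pos_of_pos hpq0) (Real.Gamma_pos_of_pos hr0))
      (Real.Gamma_pos_of_pos (by linarith)))
  have hpow : ((1+p+q)⁻¹:ℝ)^(k-2) = (1+p+q) ^ (2-(k:ℝ)) := by
    rw [show (2-(k:ℝ)) = -(((k-2:ℕ)):ℝ) by push_cast [Nat.cast_sub hk]; ring,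
      Real.rpow_neg hpq0.le, Real.rpow_natCast, inv_pow]
  rw [← ENNReal.ofReal_pow (by positivity : (0:ℝ) ≤ (1+p+q)⁻¹),
    ← ENNReal.ofReal_mul hBnn,
    ← ENNReal.ofReal_mul (mul_nonneg hBnn (by positivity)),
    ← ENNReal.ofReal_mul (Real.rpow_nonneg hT.le _)]
  congr 1
  rw [hpow]
  ring
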